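/- With p_m = (k+1)/[k(m+1)·binom(m+2+1/k, m+1)], it holds that p_m · m^{2+1/k} → (k+1)/k · Γ(2+1/k) as m → ∞; i.e., the limiting out-degree distribution of a random inserted node in a random ordered increasing k-tree follows a power law with exponent 2 + 1/k. -/

import Mathlib

/-!
Reversing the product in the binomial coefficient shows that `p_m · m^s`, with `s = 2 + 1/k`,
is exactly `(k+1)/k` times Euler's sequence `m^s m! / (s (s+1) ⋯ (s+m))`, which tends to `Γ(s)`.
-/

open Filter

/-- Generalized binomial coefficient `binom(x, n) = x(x-1)⋯(x-n+1)/n!`. -/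
noncomputable def gbinom (x : ℝ) (n : ℕ) : ℝ :=
  (∏ i ∈ Finset.range n, (x - i)) / (Nat.factorial n)

/-- The limiting out-degree probabilities
`p_m = (k+1)/(k(m+1) binom(m+2+1/k, m+1))`. -/
noncomputable def pLim (k m : ℕ) : ℝ :=
  ((k : ℝ) + 1) / ((k : ℝ) * ((m : ℝ) + 1) * gbinom ((m : ℝ) + 2 + 1 / (k : ℝ)) (m + 1))

open Finset

theorem gbinom_add_nat (x : ℝ) (n : ℕ) :
    gbinom (x + n) (n + 1) = (∏ j ∈ range (n + 1), (x + j)) / (n + 1).factorial := by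
  rw [gbinom, ← prod_range_reflect]
  congr 1
  refine prod_congr rfl fun j hj => ?_
  rw [Nat.add_sub_cancel, Nat.cast_sub (by simpa [Nat.lt_succ_iff] using hj)]
  ring

theorem pLim_mul_rpow_eq_GammaSeq (k m : ℕ) :
    pLim k m * (m : ℝ) ^ ((2 : ℝ) + 1 / k) =
      ((k : ℝ) + 1) / k * Real.GammaSeq (2 + 1 / k) m := by
  have hm : (m : ℝ) + 2 + 1 / k = 2 + 1 / k + m := by ring
  rw [pLim, hm, gbinom_add_nat, Real.GammaSeq, Nat.factorial_succ, Nat.cast_mul, Nat.cast_succ]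
  field_simp

theorem ktree_outdegree_power_law_general (k : ℕ) :
    Tendsto (fun m : ℕ => pLim k m * (m : ℝ) ^ ((2 : ℝ) + 1 / (k : ℝ))) atTop
      (nhds (((k : ℝ) + 1) / (k : ℝ) * Real.Gamma (2 + 1 / (k : ℝ)))) := by
  simp_rw [pLim_mul_rpow_eq_GammaSeq]
  exact (Real.GammaSeq_tendsto_Gamma _).const_mul _

/-- Power law: `p_m · m^{2+1/k} → (k+1)/k · Γ(2+1/k)` as `m → ∞`. -/
theorem ktree_outdegree_power_law (k : ℕ) (hk : 1 ≤ k) :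
    Tendsto (fun m : ℕ => pLim k m * (m : ℝ) ^ ((2 : ℝ) + 1 / (k : ℝ))) atTop
      (nhds (((k : ℝ) + 1) / (k : ℝ) * Real.Gamma (2 + 1 / (k : ℝ)))) :=
  ktree_outdegree_power_law_general k
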